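/- In an infra-topological space (X, τ), the intersection of two i-genuine sets is i-genuine; hence the family of i-genuine sets is itself an infra-topology on X, finer than τ. -/

import Mathlib

def IsInfraTop {X : Type*} (τ : Set (Set X)) : Prop :=
  ∅ ∈ τ ∧ Set.univ ∈ τ ∧ ∀ A B : Set X, A ∈ τ → B ∈ τ → A ∩ B ∈ τ

def iInt {X : Type*} (τ : Set (Set X)) (A : Set X) : Set X :=
  ⋃₀ {O | O ∈ τ ∧ O ⊆ A}

def IGenuine {X : Type*} (τ : Set (Set X)) (A : Set X) : Prop :=
  iInt τ A ∈ τ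

def InfraClosed {X : Type*} (τ : Set (Set X)) (C : Set X) : Prop :=
  Cᶜ ∈ τ

def iCl {X : Type*} (τ : Set (Set X)) (A : Set X) : Set X :=
  ⋂₀ {C | InfraClosed τ C ∧ A ⊆ C}

def CGenuine {X : Type*} (τ : Set (Set X)) (A : Set X) : Prop :=
  InfraClosed τ (iCl τ A)

/-! When `iInt A` and `iInt B` are members of `τ`, so is their intersection, which is then the
largest member of `τ` inside `A ∩ B`; hence `iInt (A ∩ B) = iInt A ∩ iInt B ∈ τ`. Members of `τ`
are their own `iInt`, so every member of `τ` is i-genuine. -/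

section InfraInterior

variable {X : Type*} {τ : Set (Set X)} {A B O : Set X}

theorem iInt_subset (τ : Set (Set X)) (A : Set X) : iInt τ A ⊆ A :=
  Set.sUnion_subset fun _ hO => hO.2

theorem subset_iInt (hO : O ∈ τ) (hOA : O ⊆ A) : O ⊆ iInt τ A :=
  Set.subset_sUnion_of_mem ⟨hO, hOA⟩

theorem iInt_mono (h : A ⊆ B) : iInt τ A ⊆ iInt τ B :=
  Set.sUnion_mono fun _ hO => ⟨hO.1, hO.2.trans h⟩

theorem iInt_eq_self (hA : A ∈ τ) : iInt τ A = A :=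
  (iInt_subset τ A).antisymm (subset_iInt hA subset_rfl)

theorem IGenuine.of_mem (hA : A ∈ τ) : IGenuine τ A := by
  rwa [IGenuine, iInt_eq_self hA]

theorem iInt_inter_of_iGenuine (hτ : ∀ A B : Set X, A ∈ τ → B ∈ τ → A ∩ B ∈ τ)
    (hA : IGenuine τ A) (hB : IGenuine τ B) : iInt τ (A ∩ B) = iInt τ A ∩ iInt τ B :=
  (Set.subset_inter (iInt_mono Set.inter_subset_left) (iInt_mono Set.inter_subset_right)).antisymm
    (subset_iInt (hτ _ _ hA hB) (Set.inter_subset_inter (iInt_subset τ A) (iInt_subset τ B)))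

theorem IGenuine.inter (hτ : ∀ A B : Set X, A ∈ τ → B ∈ τ → A ∩ B ∈ τ)
    (hA : IGenuine τ A) (hB : IGenuine τ B) : IGenuine τ (A ∩ B) := by
  rw [IGenuine, iInt_inter_of_iGenuine hτ hA hB]
  exact hτ _ _ hA hB

end InfraInterior

theorem stmt8 {X : Type*} (τ : Set (Set X)) (hτ : IsInfraTop τ) :
    (∀ A B : Set X, IGenuine τ A → IGenuine τ B → IGenuine τ (A ∩ B)) ∧
    IsInfraTop {A : Set X | IGenuine τ A} ∧
    τ ⊆ {A : Set X | IGenuine τ A} := by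
  obtain ⟨h_empty, h_univ, h_inter⟩ := hτ
  have h_genuine_inter : ∀ A B : Set X, IGenuine τ A → IGenuine τ B → IGenuine τ (A ∩ B) :=
    fun _ _ => IGenuine.inter h_inter
  exact ⟨h_genuine_inter, ⟨.of_mem h_empty, .of_mem h_univ, h_genuine_inter⟩,
    fun _ => IGenuine.of_mem⟩
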